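/- For any subset J ⊆ I, the natural map from the graph product Γ(𝒢_J, (G_j)_{j∈J}) over the induced subgraph 𝒢_J to the subgroup Γ_J ≤ Γ generated by the images of the G_j (j ∈ J) is an isomorphism. -/

import Mathlib

/-- The commutation relators of a graph product along the graph with adjacency `adj`. -/
def graphProdRels {I : Type*} (adj : I → I → Prop) (G : I → Type*) [∀ i, Group (G i)] :
    Set (Monoid.CoprodI G) :=
  { x | ∃ (i j : I), adj i j ∧ ∃ (gi : G i) (gj : G j),
      x = Monoid.CoprodI.of gi * Monoid.CoprodI.of gj *
        (Monoid.CoprodI.of gi)⁻¹ * (Monoid.CoprodI.of gj)⁻¹ }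

/-- The graph product of the groups `G i` along the graph with adjacency relation `adj`:
the quotient of the free product by the normal closure of the commutation relators. -/
abbrev GraphProd {I : Type*} (adj : I → I → Prop) (G : I → Type*) [∀ i, Group (G i)] :
    Type _ :=
  Monoid.CoprodI G ⧸ Subgroup.normalClosure (graphProdRels adj G)

/-- The canonical homomorphism from a vertex group into the graph product. -/
def GraphProd.of {I : Type*} (adj : I → I → Prop) (G : I → Type*) [∀ i, Group (G i)]
    (i : I) : G i →* GraphProd adj G :=
  (QuotientGroup.mk' _).comp Monoid.CoprodI.of

/-- The parabolic subgroup `Γ_J` generated by the images of the `G j`, `j ∈ J`. -/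
def GraphProd.parab {I : Type*} (adj : I → I → Prop) (G : I → Type*) [∀ i, Group (G i)]
    (J : Set I) : Subgroup (GraphProd adj G) :=
  ⨆ j ∈ J, (GraphProd.of adj G j).range

/-! The map `Γ(𝒢_J) → Γ` has a left inverse: the retraction `Γ → Γ(𝒢_J)` killing every
`G i` with `i ∉ J`, well defined because each commutation relator of `Γ` goes to a relator of
`Γ(𝒢_J)` or to `1`. So the map is injective, and its image is generated by the `G j`, `j ∈ J`,
i.e. it is `Γ_J`. -/

namespace GraphProd

variable {I : Type*} (adj : I → I → Prop) (G : I → Type*) [∀ i, Group (G i)]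

theorem commute_of {i j : I} (h : adj i j) (gi : G i) (gj : G j) :
    Commute (of adj G i gi) (of adj G j gj) := by
  have hrel : (QuotientGroup.mk' _ (Monoid.CoprodI.of gi * Monoid.CoprodI.of gj *
      (Monoid.CoprodI.of gi)⁻¹ * (Monoid.CoprodI.of gj)⁻¹) : GraphProd adj G) = 1 :=
    (QuotientGroup.eq_one_iff _).mpr (Subgroup.subset_normalClosure ⟨i, j, h, gi, gj, rfl⟩)
  rwa [map_mul, map_mul, map_mul, map_inv, map_inv, ← commutatorElement_def,
    commutatorElement_eq_one_iff_commute] at hrel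

section Lift

variable {adj G} {H : Type*} [Group H] (f : ∀ i, G i →* H)
  (hf : ∀ i j, adj i j → ∀ (gi : G i) (gj : G j), Commute (f i gi) (f j gj))

def lift : GraphProd adj G →* H :=
  QuotientGroup.lift _ (Monoid.CoprodI.lift f) <| Subgroup.normalClosure_le_normal <| by
    rintro _ ⟨i, j, h, gi, gj, rfl⟩
    simp only [SetLike.mem_coe, MonoidHom.mem_ker, map_mul, map_inv, Monoid.CoprodI.lift_of,
      (hf i j h gi gj).eq, mul_inv_cancel_right, mul_inv_cancel]

@[simp] theorem lift_of (i : I) (g : G i) : lift f hf (of adj G i g) = f i g :=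
  Monoid.CoprodI.lift_of f g

theorem range_lift : (lift f hf).range = ⨆ i, (f i).range := by
  have hsurj := QuotientGroup.mk'_surjective (Subgroup.normalClosure (graphProdRels adj G))
  rw [← Monoid.CoprodI.range_eq_iSup, (lift f hf).range_eq_map,
    ← (QuotientGroup.mk' _).range_eq_top_of_surjective hsurj, MonoidHom.map_range]
  rfl

theorem hom_ext {f g : GraphProd adj G →* H}
    (h : ∀ i, f.comp (of adj G i) = g.comp (of adj G i)) : f = g :=
  QuotientGroup.monoidHom_ext _ (Monoid.CoprodI.ext_hom _ _ h)

end Lift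

section Induced

variable (J : Set I)

def inclusion : GraphProd (fun a b : J => adj a b) (fun j : J => G j) →* GraphProd adj G :=
  lift (fun j => of adj G j) fun _ _ h => commute_of adj G h

@[simp] theorem inclusion_of (j : J) (g : G j) :
    inclusion adj G J (of _ _ j g) = of adj G j g := by
  rw [inclusion, lift_of]

theorem range_inclusion : (inclusion adj G J).range = parab adj G J := by
  rw [inclusion, range_lift, parab, iSup_subtype]

def restrict [DecidablePred (· ∈ J)] :
    GraphProd adj G →* GraphProd (fun a b : J => adj a b) (fun j : J => G j) :=
  lift (fun i => if hi : i ∈ J then of _ (fun j : J => G j) ⟨i, hi⟩ else 1) <| by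
    intro i j h gi gj
    by_cases hi : i ∈ J <;> by_cases hj : j ∈ J <;>
      simp only [hi, hj, dite_true, dite_false, MonoidHom.one_apply, Commute.one_left,
        Commute.one_right]
    exact commute_of _ (fun j : J => G j) (i := ⟨i, hi⟩) (j := ⟨j, hj⟩) h gi gj

theorem restrict_comp_inclusion [DecidablePred (· ∈ J)] :
    (restrict adj G J).comp (inclusion adj G J) = MonoidHom.id _ :=
  hom_ext fun j => by ext g; simp [restrict, j.2]

end Induced

end GraphProd

theorem graphProd_induced_subgraph_iso_general {I : Type*} (adj : I → I → Prop) (G : I → Type*)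
    [∀ i, Group (G i)] (J : Set I) :
    ∃ e : GraphProd (fun a b : J => adj a b) (fun j : J => G j) ≃*
        (GraphProd.parab adj G J),
      ∀ (j : J) (g : G j),
        ((e (GraphProd.of (fun a b : J => adj a b) (fun j : J => G j) j g) :
          GraphProd.parab adj G J) : GraphProd adj G) = GraphProd.of adj G (j : I) g := by
  classical
  have hleft : Function.LeftInverse (GraphProd.restrict adj G J) (GraphProd.inclusion adj G J) :=
    DFunLike.congr_fun (GraphProd.restrict_comp_inclusion adj G J)
  refine ⟨(MonoidHom.ofLeftInverse hleft).trans
    (MulEquiv.subgroupCongr (GraphProd.range_inclusion adj G J)), fun j g => ?_⟩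
  simp

/-- For `J ⊆ I`, the natural map from the graph product over the induced
subgraph `𝒢_J` to the subgroup `Γ_J ≤ Γ` is an isomorphism. -/
theorem graphProd_induced_subgraph_iso {I : Type*} (adj : I → I → Prop) (G : I → Type*)
    [∀ i, Group (G i)] (hsymm : Symmetric adj) (hirr : ∀ i, ¬ adj i i) (J : Set I) :
    ∃ e : GraphProd (fun a b : J => adj a b) (fun j : J => G j) ≃*
        (GraphProd.parab adj G J),
      ∀ (j : J) (g : G j),
        ((e (GraphProd.of (fun a b : J => adj a b) (fun j : J => G j) j g) :
          GraphProd.parab adj G J) : GraphProd adj G) = GraphProd.of adj G (j : I) g :=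
  graphProd_induced_subgraph_iso_general adj G J
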